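/- Let G be an A-Stick graph, ≺^c a canonical order for G, and b_t, b_s ∈ B such that b_t ≺^c b_s and 1_s ≤ 1_t. Then b_t ≺° b_s or N(b_t) ⊆ N(b_s). -/

import Mathlib

open Sum

/-- The relation `≺°` generated by the rules (O), (A), (TB), (FB), (T). -/
inductive Prec (n : ℕ) (β : Type) (E : Fin n → β → Prop) (k : β → Fin n) :
    (Fin n ⊕ β) → (Fin n ⊕ β) → Prop
  | O : ∀ {i j : Fin n}, i < j → Prec n β E k (inl i) (inl j)
  | A : ∀ {t : Fin n} {j : β}, E t j → Prec n β E k (inl t) (inr j)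
  | TB : ∀ {s t : Fin n} {h j : β}, s < t → t < k j → E s j → ¬ E t j → E t h →
      Prec n β E k (inr h) (inr j)
  | FB : ∀ {t : Fin n} {w h j : β}, Prec n β E k (inr w) (inr j) → k j < t → E t w →
      E t h → Prec n β E k (inr h) (inr j)
  | T : ∀ {p q r : Fin n ⊕ β}, Prec n β E k p q → Prec n β E k q r → Prec n β E k p r
/-- A Stick order for `G = (A ∪ B, E)`: a linear (strict total) order on `A ∪ B` such that
every `A`-endpoint of an edge precedes its `B`-endpoint, and there is no forbidden
configuration `a' ≺ a ≺ b ≺ b'` with `a'b ∈ E`, `ab' ∈ E`, `ab ∉ E`. -/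
def IsStickOrder (n : ℕ) (β : Type) (E : Fin n → β → Prop)
    (r : (Fin n ⊕ β) → (Fin n ⊕ β) → Prop) : Prop :=
  IsStrictTotalOrder (Fin n ⊕ β) r ∧
  (∀ (a : Fin n) (b : β), E a b → r (inl a) (inr b)) ∧
  ¬ ∃ (a a' : Fin n) (b b' : β),
      r (inl a') (inl a) ∧ r (inl a) (inr b) ∧ r (inr b) (inr b') ∧
      E a' b ∧ E a b' ∧ ¬ E a b

/-- An A-Stick order: a Stick order whose restriction to `A` is the given order. -/
def IsAStickOrder (n : ℕ) (β : Type) (E : Fin n → β → Prop)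
    (r : (Fin n ⊕ β) → (Fin n ⊕ β) → Prop) : Prop :=
  IsStickOrder n β E r ∧ ∀ i j : Fin n, r (inl i) (inl j) ↔ i < j
/-- A canonical order for `G` (with `m j = max {i | a_i ≺° b_j}` given as a parameter):
a linear (strict total) order on `A ∪ B` extending `≺°` in which every `b_j` is
left-optimal, i.e. `a_{m_j} ≺ b_j` and `b_j ≺ a_{m_j + 1}` whenever `m_j < n`. -/
def IsCanonicalOrder (n : ℕ) (β : Type) (E : Fin n → β → Prop) (k : β → Fin n)
    (m : β → Fin n) (r : (Fin n ⊕ β) → (Fin n ⊕ β) → Prop) : Prop :=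
  IsStrictTotalOrder (Fin n ⊕ β) r ∧
  (∀ c d : Fin n ⊕ β, Prec n β E k c d → r c d) ∧
  ∀ j : β, r (inl (m j)) (inr j) ∧
    ∀ hlt : (m j : ℕ) + 1 < n, r (inr j) (inl ⟨(m j : ℕ) + 1, hlt⟩)

/-!
If some `a_i` is adjacent to `b_t` but not to `b_s`, then `1_s ≤ 1_t ≤ i` and `i ≠ k_s`. For
`i < k_s` rule (TB) yields `b_t ≺° b_s` at once. For `i > k_s` we have `a_i ≺^c b_t ≺^c b_s`, so
left-optimality of `b_s` forces `a_i ≺° b_s`, and it remains to show: if `a_i ≺° b_j` and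
`k_j < i`, then `b_h ≺° b_j` for every neighbour `b_h` of `a_i`.

That is proved by well-founded induction on `b_j` (on an A-Stick graph `≺°` lies inside an A-Stick
order, so it is a strict order on the finite set `B`). A witness `a_i ≺° b_j` with `k_j < i` runs
through some `b_w ≺° b_j` with `a_i ≺° b_w`, and an inner induction on the derivation of
`b_w ≺° b_j` moves `b_h` below `b_j`: either `a_i b_w ∈ E` and rule (FB) applies, or `a_i` sits
strictly between an earlier neighbour of `b_w` and `k_w` and rule (TB) applies, or `i > k_w` and
the outer induction hypothesis for `b_w` applies.
-/

namespace Prec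

variable {n : ℕ} {β : Type} {E : Fin n → β → Prop} {k : β → Fin n}

theorem rel_of_isAStickOrder (hk : ∀ j, E (k j) j ∧ ∀ i, E i j → i ≤ k j)
    {r : Fin n ⊕ β → Fin n ⊕ β → Prop} (hr : IsAStickOrder n β E r) {c d : Fin n ⊕ β}
    (h : Prec n β E k c d) : r c d := by
  obtain ⟨⟨hto, hedge, hforb⟩, hA⟩ := hr
  have htrans : ∀ {a b c}, r a b → r b c → r a c := fun hab hbc =>
    hto.toIsStrictOrder.toIsTrans.trans _ _ _ hab hbc
  have htri : ∀ a b, r a b ∨ a = b ∨ r b a := by have := hto; exact trichotomous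
  induction h with
  | O hij => exact (hA _ _).mpr hij
  | A hE => exact hedge _ _ hE
  | @TB s t h j hst htk hsj htj hth =>
    rcases htri (inr h) (inr j) with hhj | hhj | hjh
    · exact hhj
    · cases hhj; exact absurd hth htj
    · exact absurd ⟨t, s, j, h, (hA _ _).mpr hst, htrans ((hA _ _).mpr htk) (hedge _ _ (hk j).1),
        hjh, hsj, hth, htj⟩ hforb
  | @FB t w h j _ hkt htw hth ih =>
    have htj : ¬ E t j := fun hE => (hk j).2 t hE |>.not_gt hkt
    rcases htri (inr h) (inr j) with hhj | hhj | hjh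
    · exact hhj
    · cases hhj; exact absurd hth htj
    · exact absurd ⟨t, k j, j, h, (hA _ _).mpr hkt, htrans (hedge _ _ htw) ih, hjh, (hk j).1,
        hth, htj⟩ hforb
  | T _ _ ih₁ ih₂ => exact htrans ih₁ ih₂

theorem irrefl_of_isAStickOrder (hk : ∀ j, E (k j) j ∧ ∀ i, E i j → i ≤ k j)
    (hA : ∃ r, IsAStickOrder n β E r) (c : Fin n ⊕ β) : ¬ Prec n β E k c c := fun hc => by
  obtain ⟨r, hr⟩ := hA
  exact hr.1.1.toIsStrictOrder.toIrrefl.irrefl c (rel_of_isAStickOrder hk hr hc)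

theorem wellFounded_inr [Finite β] (hk : ∀ j, E (k j) j ∧ ∀ i, E i j → i ≤ k j)
    (hA : ∃ r, IsAStickOrder n β E r) :
    WellFounded fun w j : β => Prec n β E k (inr w) (inr j) :=
  have : IsTrans β fun w j : β => Prec n β E k (inr w) (inr j) := ⟨fun _ _ _ => Prec.T⟩
  have : Std.Irrefl fun w j : β => Prec n β E k (inr w) (inr j) :=
    ⟨fun j => irrefl_of_isAStickOrder hk hA (inr j)⟩
  Finite.wellFounded_of_trans_of_irrefl _

theorem exists_inl_of_right_inl {c : Fin n ⊕ β} {y : Fin n} (h : Prec n β E k c (inl y)) :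
    ∃ x, c = inl x ∧ x < y := by
  generalize hd : inl y = d at h
  induction h generalizing y with
  | @O i j hij => cases hd; exact ⟨i, rfl, hij⟩
  | A _ | TB _ _ _ _ _ | FB _ _ _ _ => cases hd
  | T _ _ ih₁ ih₂ =>
    obtain ⟨x', rfl, hx'y⟩ := ih₂ hd
    obtain ⟨x, rfl, hxx'⟩ := ih₁ rfl
    exact ⟨x, rfl, hxx'.trans hx'y⟩

theorem not_inr_inl {w : β} {y : Fin n} : ¬ Prec n β E k (inr w) (inl y) := fun h => by
  obtain ⟨_, h, _⟩ := exists_inl_of_right_inl h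
  cases h

theorem exists_edge_or_exists_inr {i : Fin n} {j : β} (h : Prec n β E k (inl i) (inr j)) :
    (∃ i', i ≤ i' ∧ E i' j) ∨
      ∃ w, Prec n β E k (inl i) (inr w) ∧ Prec n β E k (inr w) (inr j) := by
  generalize hc : inl i = c at h
  generalize hd : inr j = d at h
  induction h generalizing i j with
  | O _ => cases hd
  | @A t _ hE => cases hc; cases hd; exact .inl ⟨t, le_rfl, hE⟩
  | TB _ _ _ _ _ | FB _ _ _ _ => cases hc
  | @T p q r hpq hqr _ ih₂ =>
    subst hc hd
    cases q with
    | inl y =>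
      obtain ⟨x, hx, hiy⟩ := exists_inl_of_right_inl hpq
      cases hx
      rcases ih₂ rfl rfl with ⟨i', hyi', hE⟩ | ⟨w, hyw, hwj⟩
      · exact .inl ⟨i', hiy.le.trans hyi', hE⟩
      · exact .inr ⟨w, .T hpq hyw, hwj⟩
    | inr v => exact .inr ⟨v, hpq, hqr⟩

theorem inr_of_lt_of_not_edge {i t : Fin n} {w h : β} (hkw : E (k w) w)
    (IH : ∀ i h, Prec n β E k (inl i) (inr w) → k w < i → E i h → Prec n β E k (inr h) (inr w))
    (hiw : Prec n β E k (inl i) (inr w)) (hti : t < i) (htw : E t w) (hnw : ¬ E i w)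
    (hih : E i h) : Prec n β E k (inr h) (inr w) := by
  rcases lt_trichotomy i (k w) with hlt | rfl | hgt
  · exact .TB hti hlt htw hnw hih
  · exact absurd hkw hnw
  · exact IH i h hiw hgt hih

theorem inr_of_inr_of_inl (hk : ∀ j, E (k j) j) {j : β}
    (IH : ∀ w, Prec n β E k (inr w) (inr j) → ∀ i h, Prec n β E k (inl i) (inr w) → k w < i →
      E i h → Prec n β E k (inr h) (inr w))
    {w : β} (hwj : Prec n β E k (inr w) (inr j)) {i : Fin n} {h : β}
    (hiw : Prec n β E k (inl i) (inr w)) (hki : k j < i) (hih : E i h) :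
    Prec n β E k (inr h) (inr j) := by
  generalize hc : inr w = c at hwj
  generalize hd : inr j = d at hwj
  induction hwj generalizing w with
  | O _ | A _ => cases hc
  | @TB s t w j hst htk hsj htj htw =>
    cases hc; cases hd
    have hwj : Prec n β E k (inr w) (inr j) := .TB hst htk hsj htj htw
    by_cases hiw' : E i w
    · exact .FB hwj hki hiw' hih
    · exact .T (inr_of_lt_of_not_edge (hk w) (IH w hwj) hiw (htk.trans hki) htw hiw' hih) hwj
  | @FB t u w j huj hkt htu htw ih =>
    cases hc; cases hd
    have hwj : Prec n β E k (inr w) (inr j) := .FB huj hkt htu htw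
    by_cases hiw' : E i w
    · exact .FB hwj hki hiw' hih
    rcases lt_trichotomy i t with hit | rfl | hti
    · exact ih (.T (.O hit) (.A htu)) rfl rfl
    · exact absurd htw hiw'
    · exact .T (inr_of_lt_of_not_edge (hk w) (IH w hwj) hiw hti htw hiw' hih) hwj
  | @T p q r hpq _ _ ih₂ =>
    subst hc hd
    cases q with
    | inl y => exact absurd hpq not_inr_inl
    | inr v => exact ih₂ (.T hiw hpq) rfl rfl

theorem inr_of_inl_of_lt [Finite β] (hk : ∀ j, E (k j) j ∧ ∀ i, E i j → i ≤ k j)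
    (hA : ∃ r, IsAStickOrder n β E r) {j : β} {i : Fin n} {h : β}
    (hij : Prec n β E k (inl i) (inr j)) (hki : k j < i) (hih : E i h) :
    Prec n β E k (inr h) (inr j) := by
  induction j using (wellFounded_inr hk hA).induction generalizing i h with
  | _ j IH =>
  rcases exists_edge_or_exists_inr hij with ⟨i', hii', hi'j⟩ | ⟨w, hiw, hwj⟩
  · exact absurd ((hk j).2 i' hi'j) (hki.trans_le hii').not_ge
  · exact inr_of_inr_of_inl (fun j => (hk j).1) (fun w hw _ _ => IH w hw) hwj hiw hki hih

end Prec

theorem IsCanonicalOrder.prec_of_rel {n : ℕ} {β : Type} {E : Fin n → β → Prop} {k : β → Fin n}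
    {m : β → Fin n} (hm : ∀ j, Prec n β E k (inl (m j)) (inr j))
    {rc : Fin n ⊕ β → Fin n ⊕ β → Prop} (hrc : IsCanonicalOrder n β E k m rc) {i : Fin n}
    {j : β} (hij : rc (inl i) (inr j)) : Prec n β E k (inl i) (inr j) := by
  obtain ⟨hto, hext, hleft⟩ := hrc
  have htrans : ∀ {a b c}, rc a b → rc b c → rc a c := fun hab hbc =>
    hto.toIsStrictOrder.toIsTrans.trans _ _ _ hab hbc
  have him : i ≤ m j := by
    by_contra! hmi
    have hlt : (m j : ℕ) + 1 < n := by omega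
    have hji : rc (inr j) (inl i) := by
      rcases (Fin.mk_le_of_le_val (show (m j : ℕ) + 1 ≤ i by omega) :
          (⟨_, hlt⟩ : Fin n) ≤ i).eq_or_lt with heq | hlt'
      · exact heq ▸ (hleft j).2 hlt
      · exact htrans ((hleft j).2 hlt) (hext _ _ (.O hlt'))
    exact hto.toIsStrictOrder.toIrrefl.irrefl _ (htrans hji hij)
  rcases him.eq_or_lt with rfl | hlt
  · exact hm j
  · exact .T (.O hlt) (hm j)

/-- Let `G` be an A-Stick graph, `≺^c` a canonical order for `G`, and
`b_t, b_s ∈ B` with `b_t ≺^c b_s` and `1_s ≤ 1_t`. Then `b_t ≺° b_s` or `N(b_t) ⊆ N(b_s)`. -/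
theorem stmt11 (n : ℕ) (β : Type) [Fintype β] (E : Fin n → β → Prop) (k : β → Fin n)
    (hk : ∀ j : β, E (k j) j ∧ ∀ i : Fin n, E i j → i ≤ k j)
    (one : β → Fin n)
    (hone : ∀ j : β, E (one j) j ∧ ∀ i : Fin n, E i j → one j ≤ i)
    (m : β → Fin n)
    (hm : ∀ j : β, Prec n β E k (inl (m j)) (inr j) ∧
      ∀ i : Fin n, Prec n β E k (inl i) (inr j) → i ≤ m j)
    (hA : ∃ r, IsAStickOrder n β E r)
    (rc : (Fin n ⊕ β) → (Fin n ⊕ β) → Prop)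
    (hrc : IsCanonicalOrder n β E k m rc)
    (t s : β) (hts : rc (inr t) (inr s)) (h1 : one s ≤ one t) :
    Prec n β E k (inr t) (inr s) ∨ ∀ a : Fin n, E a t → E a s := by
  refine or_iff_not_imp_right.mpr fun hsub => ?_
  obtain ⟨i, hit, his⟩ : ∃ i, E i t ∧ ¬ E i s := by simpa using hsub
  rcases lt_trichotomy i (k s) with hlt | rfl | hgt
  · have h1s : one s < i := (h1.trans ((hone t).2 i hit)).lt_of_ne
      fun he => his (he ▸ (hone s).1)
    exact .TB h1s hlt (hone s).1 his hit
  · exact absurd (hk s).1 his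
  · have hrc_is : rc (inl i) (inr s) :=
      hrc.1.toIsStrictOrder.toIsTrans.trans _ _ _ (hrc.2.1 _ _ (.A hit)) hts
    exact Prec.inr_of_inl_of_lt hk hA (hrc.prec_of_rel (fun j => (hm j).1) hrc_is) hgt hit
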